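/- Let A be an n×n complex matrix with index 1 (so rank A² = rank A = r). Then the (i,j) entry of the group inverse A^# equals (Σ_{β ∈ J_{r,n}{i}} |(A²_{.i}(a_{.j}))_β^β|) / (Σ_{β ∈ J_{r,n}} |(A²)_β^β|), where a_{.j} is the j-th column of A. -/

import Mathlib

/-!
Let `P = 1 + t • A²` over `ℂ[t]` and `q = det P`. Expanding `det (1 + t • M)` into principal
minors, the denominator of the formula is the coefficient of `t ^ r` in `q`, and (by Cramer's
rule) the numerator is the coefficient of `t ^ r` in the `(i, j)` entry of `adj P * t • A`.
From `A² X = A` and `X = A X²` one gets `adj P * A * (t + X²) = q • X`; since `deg q ≤ r`, the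
matrix polynomial `adj P * A` has no `t ^ r` term, so the coefficient of `t ^ r` in
`adj P * t • A` is that of `q • X`. Finally a rank factorization `A = U V` gives
`q = det (1 + t • (V U)²)` with `V U` an invertible `r × r` matrix, so that `deg q ≤ r` and
`[t ^ r] q = det (V U)² ≠ 0`.
-/

open Matrix Finset

namespace Polynomial

theorem coeff_mul_X_eq_of_mul_X_add_C_eq {R : Type*} [Ring R] {z p : R[X]} {c : R}
    {r : ℕ} (h : z * (X + C c) = p) (hp : p.natDegree ≤ r) : (z * X).coeff r = p.coeff r := by
  have hz : z.coeff r = 0 := by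
    by_contra hne
    have hlead : p.coeff (z.natDegree + 1) = z.leadingCoeff := by
      rw [← h, mul_add, coeff_add, coeff_mul_X, coeff_mul_C,
        coeff_eq_zero_of_natDegree_lt (Nat.lt_succ_self _), zero_mul, add_zero, leadingCoeff]
    rw [coeff_eq_zero_of_natDegree_lt (by have := le_natDegree_of_ne_zero hne; omega),
      eq_comm, leadingCoeff_eq_zero] at hlead
    simp [hlead] at hne
  rw [← h, mul_add, coeff_add, coeff_mul_C, hz, zero_mul, add_zero]

end Polynomial

namespace Matrix

open Polynomial

variable {ι m n R K : Type*}

theorem det_submatrix_orderEmbOfFin [LinearOrder ι] [CommRing R] (M : Matrix ι ι R)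
    (s : Finset ι) {k : ℕ} (h : s.card = k) :
    det (M.submatrix (s.orderEmbOfFin h) (s.orderEmbOfFin h)) =
      det (M.submatrix ((↑) : s → ι) (↑)) := by
  have hcomp : ⇑(s.orderEmbOfFin h) = ((↑) : s → ι) ∘ s.orderIsoOfFin h := by
    ext a; simp
  rw [hcomp, ← submatrix_submatrix]
  exact det_submatrix_equiv_self (s.orderIsoOfFin h).toEquiv _

theorem sum_dite_card_det_submatrix_orderEmbOfFin [LinearOrder ι] [CommRing R]
    (S : Finset (Finset ι)) (M : Matrix ι ι R) (k : ℕ) :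
    ∑ s ∈ S, (if h : s.card = k then det (M.submatrix (s.orderEmbOfFin h) (s.orderEmbOfFin h))
      else 0) = ∑ s ∈ S with s.card = k, det (M.submatrix ((↑) : s → ι) (↑)) := by
  rw [sum_filter]
  refine sum_congr rfl fun s _ => ?_
  split_ifs with h
  · exact det_submatrix_orderEmbOfFin M s h
  · rfl

theorem exists_eq_mul_of_rank [Field K] [Fintype m] [Fintype n] (A : Matrix m n K) :
    ∃ (U : Matrix m (Fin A.rank) K) (V : Matrix (Fin A.rank) n K), A = U * V := by
  let b := Module.finBasisOfFinrankEq K _ A.rank_eq_finrank_span_cols.symm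
  have hcol (j : n) : A.col j ∈ Submodule.span K (Set.range A.col) :=
    Submodule.subset_span ⟨j, rfl⟩
  refine ⟨of fun i k => (b k : m → K) i, of fun k j => b.repr ⟨A.col j, hcol j⟩ k, ?_⟩
  ext i j
  have hsum := congrArg (fun v : Submodule.span K (Set.range A.col) => (v : m → K) i)
    (b.sum_repr ⟨A.col j, hcol j⟩)
  simp only [Submodule.coe_sum, Submodule.coe_smul, Finset.sum_apply, Pi.smul_apply,
    smul_eq_mul] at hsum
  rw [mul_apply, ← col_apply A j i, ← hsum]
  exact sum_congr rfl fun _ _ => mul_comm _ _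

variable [Fintype n] [DecidableEq n]

section CommRing

variable [CommRing R]

theorem natDegree_det_one_add_X_smul_le (M : Matrix n n R) :
    (det (1 + (X : R[X]) • M.map C)).natDegree ≤ Fintype.card n := by
  simpa [add_comm] using natDegree_det_X_add_C_le M 1

theorem coeff_card_det_one_add_X_smul (M : Matrix n n R) :
    (det (1 + (X : R[X]) • M.map C)).coeff (Fintype.card n) = M.det := by
  rw [coeff_det_one_add_X_smul_eq_sum_minors, ← card_univ, powersetCard_self, sum_singleton]
  exact det_submatrix_equiv_self (Equiv.subtypeUnivEquiv mem_univ) M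

theorem det_one_add_X_smul_mul_comm [Fintype m] [DecidableEq m] (U : Matrix n m R)
    (V : Matrix m n R) :
    det (1 + (X : R[X]) • (U * V).map C) = det (1 + (X : R[X]) • (V * U).map C) := by
  simp only [Matrix.map_mul, ← smul_mul]
  rw [det_one_add_mul_comm, Matrix.mul_smul, smul_mul]

theorem coeff_det_one_add_X_smul_updateCol (M : Matrix n n R) (i : n) (b : n → R) (k : ℕ) :
    (det ((1 + (X : R[X]) • M.map C).updateCol i (fun a => X * C (b a)))).coeff k =
      ∑ s ∈ powersetCard k univ with i ∈ s,
        det ((M.updateCol i b).submatrix ((↑) : s → n) (↑)) := by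
  set N := M.updateCol i b
  set N₀ := M.updateCol i 0
  -- Column `i` of `1 + X • N.map C` is `Pi.single i 1 + X • b`; split the determinant along it.
  have hsplit : det (1 + (X : R[X]) • N.map C) = det (1 + (X : R[X]) • N₀.map C) +
      det ((1 + (X : R[X]) • M.map C).updateCol i (fun a => X * C (b a))) := by
    have hU : 1 + (X : R[X]) • N.map C =
        (1 + (X : R[X]) • N.map C).updateCol i (Pi.single i 1 + fun a => X * C (b a)) := by
      ext a c
      by_cases hc : c = i
      · subst hc; simp [N, one_apply, Pi.single_apply]
      · simp [hc]
    rw [hU, det_updateCol_add]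
    congr 2
    · ext a c
      by_cases hc : c = i
      · subst hc; simp [N₀, one_apply, Pi.single_apply]
      · simp [N, N₀, hc]
    · ext a c
      by_cases hc : c = i
      · subst hc; simp
      · simp [N, hc]
  rw [eq_sub_of_add_eq' hsplit.symm, coeff_sub, coeff_det_one_add_X_smul_eq_sum_minors,
    coeff_det_one_add_X_smul_eq_sum_minors, ← sum_sub_distrib, sum_filter]
  refine sum_congr rfl fun s _ => ?_
  split_ifs with hi
  · have h₀ : det (N₀.submatrix ((↑) : s → n) (↑)) = 0 :=
      det_eq_zero_of_column_eq_zero ⟨i, hi⟩ fun a => by simp [N₀]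
    rw [h₀, sub_zero]
  · have : N.submatrix ((↑) : s → n) ((↑) : s → n) = N₀.submatrix (↑) (↑) := by
      ext a ⟨c, hc⟩
      have : c ≠ i := fun h => hi (h ▸ hc)
      simp [N, N₀, updateCol_ne this]
    rw [this, sub_self]

theorem coeff_adjugate_one_add_X_smul_mul (M N : Matrix n n R) (i j : n) (k : ℕ) :
    ((adjugate (1 + (X : R[X]) • M.map C) * ((X : R[X]) • N.map C) : Matrix n n R[X])
        i j).coeff k =
      ∑ s ∈ powersetCard k univ with i ∈ s,
        det ((M.updateCol i (fun a => N a j)).submatrix ((↑) : s → n) (↑)) := by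
  have hcramer :
      (adjugate (1 + (X : R[X]) • M.map C) * ((X : R[X]) • N.map C) : Matrix n n R[X]) i j =
        det ((1 + (X : R[X]) • M.map C).updateCol i (fun a => X * C (N a j))) := by
    rw [← cramer_apply, cramer_eq_adjugate_mulVec]
    simp only [smul_apply, mul_apply, mulVec, dotProduct, map_apply, smul_eq_mul]
  rw [hcramer, coeff_det_one_add_X_smul_updateCol]

theorem coeff_adjugate_mul_X_smul_of_groupInverse {A Y : Matrix n n R} (hA : A ^ 2 * Y = A)
    (hY : Y * A * Y = Y) (hAY : A * Y = Y * A) {r : ℕ}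
    (hdeg : (det (1 + (X : R[X]) • (A ^ 2).map C)).natDegree ≤ r) (i j : n) :
    ((adjugate (1 + (X : R[X]) • (A ^ 2).map C) * ((X : R[X]) • A.map C) : Matrix n n R[X])
        i j).coeff r =
      (det (1 + (X : R[X]) • (A ^ 2).map C)).coeff r * Y i j := by
  set P := 1 + (X : R[X]) • (A ^ 2).map C
  have hPY : P * Y.map C = Y.map C + (X : R[X]) • A.map C := by
    rw [add_mul, one_mul, smul_mul, ← Matrix.map_mul, hA]
  have hAYY : A * Y * Y = Y := by rw [hAY, hY]
  have hrel : adjugate P * A.map C * ((X : R[X]) • 1 + (Y * Y).map C) = det P • Y.map C :=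
    calc adjugate P * A.map C * ((X : R[X]) • 1 + (Y * Y).map C)
        = (X : R[X]) • (adjugate P * A.map C) + adjugate P * (A * Y * Y).map C := by
          rw [Matrix.mul_add, Matrix.mul_smul, Matrix.mul_one, Matrix.mul_assoc, ← Matrix.map_mul,
            ← Matrix.mul_assoc A]
      _ = det P • Y.map C := by
          rw [hAYY, ← Matrix.mul_smul, ← add_sub_cancel_left (Y.map C) ((X : R[X]) • A.map C),
            ← hPY, Matrix.mul_sub, ← Matrix.mul_assoc, adjugate_mul, smul_mul, Matrix.one_mul,
            sub_add_cancel]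
  have hpoly : matPolyEquiv (adjugate P * A.map C) * (X + C (Y * Y)) =
      (det P).map (algebraMap R (Matrix n n R)) * C Y := by
    simpa using congrArg matPolyEquiv hrel
  have hcoeff := coeff_mul_X_eq_of_mul_X_add_C_eq hpoly
    ((natDegree_mul_C_le _ _).trans (natDegree_map_le.trans hdeg))
  have hmat : (matPolyEquiv (adjugate P * ((X : R[X]) • A.map C))).coeff r =
      (det P).coeff r • Y := by
    rw [Matrix.mul_smul, matPolyEquiv_map_smul, Polynomial.map_X, X_mul, hcoeff, coeff_mul_C,
      coeff_map, Algebra.smul_def]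
  rw [← matPolyEquiv_coeff_apply, hmat, smul_apply, smul_eq_mul]

end CommRing

section Field

variable [Field K]

theorem isUnit_of_rank_eq_card (M : Matrix n n K) (h : M.rank = Fintype.card n) : IsUnit M := by
  refine mulVec_surjective_iff_isUnit.mp (LinearMap.range_eq_top (f := M.mulVecLin).mp ?_)
  apply Submodule.eq_top_of_finrank_eq
  rw [← rank, h, Module.finrank_fintype_fun_eq_card]

theorem exists_det_one_add_X_smul_sq_eq (A : Matrix n n K) (hA : (A ^ 2).rank = A.rank) :
    ∃ B : Matrix (Fin A.rank) (Fin A.rank) K, IsUnit B ∧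
      det (1 + (X : K[X]) • (A ^ 2).map C) = det (1 + (X : K[X]) • (B ^ 2).map C) := by
  obtain ⟨U, V, hUV⟩ := exists_eq_mul_of_rank A
  have hA2 : A ^ 2 = U * (V * U * V) := by simp only [sq, hUV, Matrix.mul_assoc]
  refine ⟨V * U, isUnit_of_rank_eq_card _ (le_antisymm (rank_le_card_width _) ?_), ?_⟩
  · calc Fintype.card (Fin A.rank) = (A ^ 2).rank := by rw [Fintype.card_fin, hA]
      _ ≤ (V * U).rank := by
        rw [hA2, ← Matrix.mul_assoc]
        exact (rank_mul_le_left _ _).trans (rank_mul_le_right _ _)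
  · rw [hA2, det_one_add_X_smul_mul_comm, sq, Matrix.mul_assoc]

theorem natDegree_det_one_add_X_smul_sq_le (A : Matrix n n K) (hA : (A ^ 2).rank = A.rank) :
    (det (1 + (X : K[X]) • (A ^ 2).map C)).natDegree ≤ A.rank := by
  obtain ⟨B, -, hB⟩ := exists_det_one_add_X_smul_sq_eq A hA
  rw [hB]
  exact (natDegree_det_one_add_X_smul_le _).trans_eq (Fintype.card_fin _)

theorem coeff_rank_det_one_add_X_smul_sq_ne_zero (A : Matrix n n K)
    (hA : (A ^ 2).rank = A.rank) : (det (1 + (X : K[X]) • (A ^ 2).map C)).coeff A.rank ≠ 0 := by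
  obtain ⟨B, hBu, hB⟩ := exists_det_one_add_X_smul_sq_eq A hA
  have := coeff_card_det_one_add_X_smul (B ^ 2)
  rw [Fintype.card_fin, ← hB] at this
  rw [this, det_pow]
  exact pow_ne_zero _ ((isUnit_iff_isUnit_det B).mp hBu).ne_zero

end Field

end Matrix

theorem group_inverse_det_rep_general (n r : ℕ)
    (A : Matrix (Fin n) (Fin n) ℂ)
    (hk : (A ^ 2).rank = A.rank) (hr : A.rank = r)
    (X : Matrix (Fin n) (Fin n) ℂ)
    (h1 : A ^ 2 * X = A) (h2 : X * A * X = X) (h3 : A * X = X * A) :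
    ∀ i j : Fin n,
      X i j =
        (∑ β : Finset (Fin n), if i ∈ β then
            (if h : β.card = r then
              det (((A ^ 2).updateCol i (fun s => A s j)).submatrix
                (β.orderEmbOfFin h) (β.orderEmbOfFin h)) else 0) else 0) /
        (∑ β : Finset (Fin n), if h : β.card = r then
            det ((A ^ 2).submatrix (β.orderEmbOfFin h) (β.orderEmbOfFin h)) else 0) := by
  intro i j
  have hdeg := natDegree_det_one_add_X_smul_sq_le A hk
  have hne := coeff_rank_det_one_add_X_smul_sq_ne_zero A hk
  rw [hr] at hdeg hne
  have hcard : (univ.filter fun β : Finset (Fin n) => β.card = r) = powersetCard r univ := by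
    ext; simp
  have hcard_mem :
      ((univ.filter fun β : Finset (Fin n) => i ∈ β).filter fun β => β.card = r) =
        (powersetCard r univ).filter (i ∈ ·) := by
    ext; simp [and_comm]
  rw [← sum_filter, sum_dite_card_det_submatrix_orderEmbOfFin,
    sum_dite_card_det_submatrix_orderEmbOfFin, hcard, hcard_mem,
    ← coeff_det_one_add_X_smul_eq_sum_minors, ← coeff_adjugate_one_add_X_smul_mul,
    coeff_adjugate_mul_X_smul_of_groupInverse h1 h2 h3 hdeg, mul_div_cancel_left₀ _ hne]

theorem group_inverse_det_rep (n r : ℕ) (hr1 : 1 ≤ r)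
    (A : Matrix (Fin n) (Fin n) ℂ)
    (hk : (A ^ 2).rank = A.rank) (hr : A.rank = r)
    (X : Matrix (Fin n) (Fin n) ℂ)
    (h1 : A ^ 2 * X = A) (h2 : X * A * X = X) (h3 : A * X = X * A) :
    ∀ i j : Fin n,
      X i j =
        (∑ β : Finset (Fin n), if i ∈ β then
            (if h : β.card = r then
              det (((A ^ 2).updateCol i (fun s => A s j)).submatrix
                (β.orderEmbOfFin h) (β.orderEmbOfFin h)) else 0) else 0) /
        (∑ β : Finset (Fin n), if h : β.card = r then
            det ((A ^ 2).submatrix (β.orderEmbOfFin h) (β.orderEmbOfFin h)) else 0) :=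
  group_inverse_det_rep_general n r A hk hr X h1 h2 h3
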